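/- Let S be a t-conorm and T a t-norm, with X a set of at least two elements. Every fuzzy binary relation on X strongly decomposes with respect to (T,S) in a unique way, if and only if S is continuous in the first component and for all w ∈ [0,1], the set D¹_S(w) ∩ D⁰_T(w) has exactly one element. -/

import Mathlib

structure Tconorm where
  S : unitInterval → unitInterval → unitInterval
  comm : ∀ a b, S a b = S b a
  assoc : ∀ a b c, S a (S b c) = S (S a b) c
  mono : ∀ a b c d, a ≤ c → b ≤ d → S a b ≤ S c d
  S_zero : ∀ a, S a 0 = a
  S_one : ∀ a, S a 1 = 1

structure Tnorm where
  T : unitInterval → unitInterval → unitInterval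
  comm : ∀ a b, T a b = T b a
  assoc : ∀ a b c, T a (T b c) = T (T a b) c
  mono : ∀ a b c d, a ≤ c → b ≤ d → T a b ≤ T c d
  T_one : ∀ a, T a 1 = a
  T_zero : ∀ a, T a 0 = 0

/-- A fuzzy binary relation `P` is asymmetric. -/
def FAsymm {X : Type*} (P : X → X → unitInterval) : Prop :=
  ∀ x y, 0 < P x y → P y x = 0

/-- A fuzzy binary relation `I` is symmetric. -/
def FSymm {X : Type*} (I : X → X → unitInterval) : Prop :=
  ∀ x y, I x y = I y x

/-- `(P, I)` is a weak decomposition of `R` with respect to the t-conorm `S`. -/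
def IsWeakDecomp {X : Type*} (S : Tconorm) (R P I : X → X → unitInterval) : Prop :=
  FAsymm P ∧ FSymm I ∧ (∀ x y, R x y = S.S (P x y) (I x y)) ∧
    ∀ x y, I x y = 1 → P x y = 0

/-- `(P, I)` is a strong decomposition of `R` with respect to `(T, S)`. -/
def IsStrongDecomp {X : Type*} (T : Tnorm) (S : Tconorm)
    (R P I : X → X → unitInterval) : Prop :=
  FAsymm P ∧ FSymm I ∧ (∀ x y, R x y = S.S (P x y) (I x y)) ∧
    ∀ x y, T.T (P x y) (I x y) = 0

/-- The triplet `(R, P, I)` is a fuzzy preference (FP1–FP6). -/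
def IsFuzzyPref {X : Type*} (R P I : X → X → unitInterval) : Prop :=
  (∀ x y, 0 < P x y → P y x = 0) ∧
  (∀ x y, I x y = I y x) ∧
  (∀ x y, P x y ≤ R x y) ∧
  (∀ x y, R y x < R x y ↔ 0 < P x y) ∧
  (∀ x y, P x y = 0 → R x y = I x y) ∧
  (∀ x y z w, I x y ≤ I z w → P x y ≤ P z w → R x y ≤ R z w)

/-- The 1-interval of `w` for the t-conorm `S`. -/
def D1 (S : Tconorm) (w : unitInterval) : Set unitInterval := {t | S.S t w = 1}

/-- The 0-interval of `w` for the t-norm `T`. -/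
def D0 (T : Tnorm) (w : unitInterval) : Set unitInterval := {t | T.T t w = 0}


/-!
In every strong decomposition the indifference part is forced, `I x y = min (R x y) (R y x)`, so
`P x y` has to solve `S p b = a`, `T p b = 0` with `a = R x y ≥ b = I x y`; on a set with two
points every pair `b ≤ a` occurs. Unique decomposability thus means that `S(·, b)` maps
`D⁰_T(b)` bijectively onto `[b, 1]`. Surjectivity of the monotone map `S(·, b)` onto `[b, 1]` is
continuity, and uniqueness at level `a = 1` is the singleton condition. Conversely, if
`D¹_S(b) ∩ D⁰_T(b) = {n}` then `D⁰_T(b) = [0, n]`, which `S(·, b)` maps onto `[b, 1]` by the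
intermediate value theorem; injectivity below level `1` holds because a flat piece
`S d a = a` with `d > 0`, `a < 1` would produce an idempotent `0 < z < 1` of `S`; by continuity
`S(·, z)` would then fix all of `[z, 1]`, yet `S n z = 1` for the point `n < 1` of
`D¹_S(z) ∩ D⁰_T(z)`.
-/

open Set

namespace Tconorm

variable (S : Tconorm)

lemma S_zero_left (a : unitInterval) : S.S 0 a = a := S.comm 0 a ▸ S.S_zero a

lemma S_one_left (a : unitInterval) : S.S 1 a = 1 := S.comm 1 a ▸ S.S_one a

lemma le_S_left (a b : unitInterval) : a ≤ S.S a b := by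
  simpa only [S.S_zero] using S.mono a 0 a b le_rfl unitInterval.nonneg'

lemma le_S_right (a b : unitInterval) : b ≤ S.S a b :=
  S.comm b a ▸ S.le_S_left b a

/-- By the intermediate value theorem `S(·, z)` fixes every point of `[z, 1]`, so it cannot
reach `1` at any `n < 1` unless `z = 1`. -/
theorem eq_one_of_idempotent {z n : unitInterval} (hc : Continuous fun a => S.S a z)
    (hz : S.S z z = z) (hn : n < 1) (hnz : S.S n z = 1) : z = 1 := by
  have hfix : ∀ v, z ≤ v → S.S v z = v := by
    intro v hv
    obtain ⟨u, -, hu : S.S u z = v⟩ :=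
      intermediate_value_Icc (zero_le_one' unitInterval) hc.continuousOn
        ⟨(S.S_zero_left z).symm ▸ hv, (S.S_one_left z).symm ▸ unitInterval.le_one'⟩
    rw [← hu, ← S.assoc, hz]
  have hmax : S.S (max z n) z = 1 :=
    le_antisymm unitInterval.le_one' (hnz ▸ S.mono _ _ _ _ (le_max_right z n) le_rfl)
  rw [hfix _ (le_max_left z n)] at hmax
  by_contra hz1
  exact (max_lt (lt_of_le_of_ne unitInterval.le_one' hz1) hn).ne hmax

/-- The supremum of `{t | S t a = a}` is an idempotent of `S`. -/
theorem eq_one_of_S_eq_self (hc : ∀ b, Continuous fun a => S.S a b)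
    (hS1 : ∀ z, 0 < z → ∃ n < 1, S.S n z = 1) {a d : unitInterval} (hd : 0 < d)
    (hda : S.S d a = a) : a = 1 := by
  set A := {t | S.S t a = a}
  have hbdd : BddAbove A := OrderTop.bddAbove A
  have hzA : S.S (sSup A) a = a := (isClosed_eq (hc a) continuous_const).csSup_mem ⟨d, hda⟩ hbdd
  have hzz : S.S (sSup A) (sSup A) = sSup A :=
    le_antisymm (le_csSup hbdd (show S.S _ a = a by rw [← S.assoc, hzA, hzA])) (S.le_S_left _ _)
  obtain ⟨n, hn, hnz⟩ := hS1 _ (hd.trans_le (le_csSup hbdd hda))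
  rw [S.eq_one_of_idempotent (hc _) hzz hn hnz, S.S_one_left] at hzA
  exact hzA.symm

theorem eq_of_S_eq_of_ne_one (hc : ∀ b, Continuous fun a => S.S a b)
    (hS1 : ∀ z, 0 < z → ∃ n < 1, S.S n z = 1) {p q b : unitInterval} (hpq : S.S p b = S.S q b)
    (hq1 : S.S q b ≠ 1) : p = q := by
  wlog hle : p ≤ q generalizing p q
  · exact (this hpq.symm (hpq ▸ hq1) (le_of_not_ge hle)).symm
  by_contra hne
  obtain ⟨d, -, hd : S.S d p = q⟩ :=
    intermediate_value_Icc (zero_le_one' unitInterval) (hc p).continuousOn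
      ⟨(S.S_zero_left p).symm ▸ hle, (S.S_one_left p).symm ▸ unitInterval.le_one'⟩
  have hd0 : 0 < d := by
    refine lt_of_le_of_ne unitInterval.nonneg' fun h0 => hne ?_
    rw [← hd, ← h0, S.S_zero_left]
  refine hq1 (S.eq_one_of_S_eq_self hc hS1 hd0 ?_)
  rw [← hpq, S.assoc, hd, hpq]

end Tconorm

lemma Tnorm.T_zero_left (T : Tnorm) (a : unitInterval) : T.T 0 a = 0 :=
  T.comm 0 a ▸ T.T_zero a

lemma Tnorm.T_one_left (T : Tnorm) (a : unitInterval) : T.T 1 a = a :=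
  T.comm 1 a ▸ T.T_one a

lemma isUpperSet_D1 (S : Tconorm) (w : unitInterval) : IsUpperSet (D1 S w) := fun _ _ hle h =>
  le_antisymm unitInterval.le_one' (h ▸ S.mono _ _ _ _ hle le_rfl)

lemma isLowerSet_D0 (T : Tnorm) (w : unitInterval) : IsLowerSet (D0 T w) := fun _ _ hle h =>
  le_antisymm (h ▸ T.mono _ _ _ _ hle le_rfl) unitInterval.nonneg'

theorem IsUpperSet.eq_Ici_of_inter_eq_singleton {α : Type*} [LinearOrder α] {U L : Set α}
    {n : α} (hU : IsUpperSet U) (hL : IsLowerSet L) (h : U ∩ L = {n}) :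
    U = Ici n ∧ L = Iic n := by
  have hn : n ∈ U ∩ L := h ▸ rfl
  have hne : ∀ t, t ∈ U → t ∈ L → t = n := fun t htU htL => by
    rw [← mem_singleton_iff, ← h]
    exact ⟨htU, htL⟩
  refine ⟨Set.ext fun t => ⟨fun ht => ?_, fun ht => hU ht hn.1⟩,
    Set.ext fun t => ⟨fun ht => ?_, fun ht => hL ht hn.2⟩⟩
  · exact not_lt.1 fun hlt => hlt.ne (hne t ht (hL hlt.le hn.2))
  · exact not_lt.1 fun hlt => hlt.ne' (hne t (hU hlt.le hn.1) ht)

def HasUniqueDifference (S : Tconorm) (T : Tnorm) : Prop :=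
  ∀ a b : unitInterval, b ≤ a → ∃! p, S.S p b = a ∧ T.T p b = 0

section HasUniqueDifference

variable {S : Tconorm} {T : Tnorm}

theorem HasUniqueDifference.continuous (h : HasUniqueDifference S T) (b : unitInterval) :
    Continuous fun a => S.S a b := by
  have hmem : ∀ a, S.S a b ∈ Icc b 1 := fun a => ⟨S.le_S_right a b, unitInterval.le_one'⟩
  have hmono : Monotone (codRestrict (fun a => S.S a b) _ hmem) :=
    fun _ _ huv => S.mono _ _ _ _ huv le_rfl
  have hsurj : Function.Surjective (codRestrict (fun a => S.S a b) _ hmem) := by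
    rintro ⟨c, hbc, -⟩
    obtain ⟨p, ⟨hp, -⟩, -⟩ := h c b hbc
    exact ⟨p, Subtype.ext hp⟩
  exact continuous_subtype_val.comp (hmono.continuous_of_surjective hsurj)

theorem HasUniqueDifference.exists_D1_inter_D0_eq_singleton (h : HasUniqueDifference S T)
    (w : unitInterval) : ∃ a, D1 S w ∩ D0 T w = {a} := by
  obtain ⟨p, hp, huniq⟩ := h 1 w unitInterval.le_one'
  exact ⟨p, eq_singleton_iff_unique_mem.2 ⟨hp, huniq⟩⟩

theorem hasUniqueDifference_of_continuous (hc : ∀ b, Continuous fun a => S.S a b)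
    (hs : ∀ w, ∃ a, D1 S w ∩ D0 T w = {a}) : HasUniqueDifference S T := by
  have hS1 : ∀ z, 0 < z → ∃ n < 1, S.S n z = 1 := by
    intro z hz
    obtain ⟨n, hn⟩ := hs z
    have hnm : n ∈ D1 S z ∩ D0 T z := hn ▸ rfl
    refine ⟨n, lt_of_le_of_ne unitInterval.le_one' ?_, hnm.1⟩
    rintro rfl
    exact hz.ne' ((T.T_one_left z).symm.trans hnm.2)
  intro a b hba
  obtain ⟨n, hn⟩ := hs b
  obtain ⟨hD1, hD0⟩ := (isUpperSet_D1 S b).eq_Ici_of_inter_eq_singleton (isLowerSet_D0 T b) hn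
  have hnb : n ∈ D1 S b := hD1 ▸ self_mem_Ici
  obtain ⟨p, hp, hpa : S.S p b = a⟩ :=
    intermediate_value_Icc unitInterval.nonneg' (hc b).continuousOn
      ⟨(S.S_zero_left b).symm ▸ hba, hnb.symm ▸ unitInterval.le_one'⟩
  have hp0 : p ∈ D0 T b := hD0 ▸ hp.2
  refine ⟨p, ⟨hpa, hp0⟩, fun q ⟨hqa, hq0⟩ => ?_⟩
  by_cases ha1 : a = 1
  · have hq : q ∈ D1 S b ∩ D0 T b := ⟨hqa.trans ha1, hq0⟩
    have hp : p ∈ D1 S b ∩ D0 T b := ⟨hpa.trans ha1, hp0⟩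
    rw [hn] at hq hp
    exact hq.trans hp.symm
  · exact S.eq_of_S_eq_of_ne_one hc hS1 (hqa.trans hpa.symm) (hpa ▸ ha1)

end HasUniqueDifference

section Decomposition

variable {X : Type*}

theorem eq_min_of_decomp {S : Tconorm} {R P I : X → X → unitInterval} (hP : FAsymm P)
    (hI : FSymm I) (hR : ∀ x y, R x y = S.S (P x y) (I x y)) (x y : X) :
    I x y = min (R x y) (R y x) := by
  have hle : ∀ x y, I x y ≤ R x y := fun x y => (hR x y).symm ▸ S.le_S_right _ _
  have hP0 : ∀ x y, P x y = 0 → R x y = I x y := fun x y h => by rw [hR, h, S.S_zero_left]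
  refine le_antisymm (le_min (hle x y) (hI x y ▸ hle y x)) ?_
  rcases (unitInterval.nonneg' : 0 ≤ P x y).eq_or_lt with h | h
  · exact (min_le_left _ _).trans (hP0 x y h.symm).le
  · exact (min_le_right _ _).trans ((hP0 y x (hP x y h)).trans (hI y x)).le

def HasUniqueStrongDecomp (T : Tnorm) (S : Tconorm) (R : X → X → unitInterval) : Prop :=
  ∃ P I : X → X → unitInterval, IsStrongDecomp T S R P I ∧
    ∀ P' I' : X → X → unitInterval, IsStrongDecomp T S R P' I' → P' = P ∧ I' = I

def pairRel [DecidableEq X] (x₀ y₀ : X) (a b : unitInterval) : X → X → unitInterval :=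
  fun x y => if x = x₀ ∧ y = y₀ then a else if x = y₀ ∧ y = x₀ then b else 0

theorem isStrongDecomp_pairRel [DecidableEq X] {S : Tconorm} {T : Tnorm} {x₀ y₀ : X}
    (hxy : x₀ ≠ y₀) {a b p : unitInterval} (hS : S.S p b = a) (hT : T.T p b = 0) :
    IsStrongDecomp T S (pairRel x₀ y₀ a b) (pairRel x₀ y₀ p 0) (pairRel x₀ y₀ b b) := by
  refine ⟨fun x y => ?_, fun x y => ?_, fun x y => ?_, fun x y => ?_⟩ <;>
    simp only [pairRel] <;> split_ifs <;> simp_all [S.S_zero_left, T.T_zero_left]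

theorem HasUniqueDifference.hasUniqueStrongDecomp {S : Tconorm} {T : Tnorm}
    (h : HasUniqueDifference S T) (R : X → X → unitInterval) : HasUniqueStrongDecomp T S R := by
  choose P hP hPuniq using fun x y => h (R x y) (min (R x y) (R y x)) (min_le_left _ _)
  have hP0 : ∀ x y, R x y ≤ R y x → P x y = 0 := fun x y hle =>
    (hPuniq x y 0 ⟨by rw [min_eq_left hle, S.S_zero_left], T.T_zero_left _⟩).symm
  refine ⟨P, fun x y => min (R x y) (R y x),
    ⟨fun x y hpos => hP0 y x (le_of_not_gt fun hlt => hpos.ne' (hP0 x y hlt.le)),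
      fun x y => min_comm _ _, fun x y => (hP x y).1.symm, fun x y => (hP x y).2⟩, ?_⟩
  rintro P' I' ⟨hP', hI', hR', hT'⟩
  have hI'min := eq_min_of_decomp hP' hI' hR'
  refine ⟨funext₂ fun x y => hPuniq x y _ ⟨?_, ?_⟩, funext₂ hI'min⟩
  · rw [← hI'min, ← hR']
  · rw [← hI'min, hT']

theorem hasUniqueDifference_of_forall_hasUniqueStrongDecomp {S : Tconorm} {T : Tnorm}
    (hX : ∃ x y : X, x ≠ y)
    (H : ∀ R : X → X → unitInterval, HasUniqueStrongDecomp T S R) :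
    HasUniqueDifference S T := by
  classical
  obtain ⟨x₀, y₀, hxy⟩ := hX
  intro a b hba
  obtain ⟨P, I, ⟨hP, hI, hR, hT⟩, huniq⟩ := H (pairRel x₀ y₀ a b)
  have hIb : I x₀ y₀ = b := by
    rw [eq_min_of_decomp hP hI hR]
    simp [pairRel, hxy, hxy.symm, hba]
  refine ⟨P x₀ y₀, ⟨?_, hIb ▸ hT x₀ y₀⟩, fun q hq => ?_⟩
  · rw [← hIb, ← hR]
    simp [pairRel]
  · have hPq := (huniq _ _ (isStrongDecomp_pairRel hxy hq.1 hq.2)).1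
    simpa [pairRel] using congrFun (congrFun hPq x₀) y₀

end Decomposition

/-- Every fuzzy binary relation on a set with at least two elements strongly decomposes
w.r.t. `(T, S)` in a unique way iff `S` is continuous in the first coordinate and every
intersection `D¹_S(w) ∩ D⁰_T(w)` is a singleton. -/
theorem strong_decomposable_unique_iff {X : Type*} (hX : ∃ x y : X, x ≠ y)
    (S : Tconorm) (T : Tnorm) :
    (∀ R : X → X → unitInterval, ∃ P I : X → X → unitInterval,
        IsStrongDecomp T S R P I ∧
        ∀ P' I' : X → X → unitInterval, IsStrongDecomp T S R P' I' → P' = P ∧ I' = I) ↔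
    ((∀ b, Continuous fun a => S.S a b) ∧ ∀ w, ∃ a, D1 S w ∩ D0 T w = {a}) := by
  refine ⟨fun H => ?_, fun ⟨hc, hs⟩ =>
    (hasUniqueDifference_of_continuous hc hs).hasUniqueStrongDecomp⟩
  have h := hasUniqueDifference_of_forall_hasUniqueStrongDecomp hX H
  exact ⟨h.continuous, h.exists_D1_inter_D0_eq_singleton⟩
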